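/- Let p be a real number with p ≥ 2, d ≥ 1, and let u : ℝ^d → ℝ be twice continuously differentiable with compact support. Then −∫_{ℝ^d} Δu(x) · |u(x)|^{p-2}u(x) dx = (p − 1) ∫_{ℝ^d} |u(x)|^{p-2} |∇u(x)|^2 dx. -/

import Mathlib

/-!
For `q ≥ 0` the signed power `t ↦ |t|^q t` is `C¹` with derivative `(q + 1)|t|^q`: away from `0`
this is the chain rule, and at `0` the derivative is recovered from its continuous extension.
Hence `v = |u|^{p-2} u` is `C¹` with `∇v = (p - 1)|u|^{p-2} ∇u`, and the claim is Green's identity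
`∫ v Δu = -∫ ⟪∇v, ∇u⟫`, which is integration by parts in each coordinate direction.
-/

open MeasureTheory

/-- The Laplacian `Δu(x) = ∑ i, ∂²u/∂x_i²(x)` as the sum of second partial derivatives. -/
noncomputable def lap {d : ℕ} (u : EuclideanSpace ℝ (Fin d) → ℝ)
    (x : EuclideanSpace ℝ (Fin d)) : ℝ :=
  ∑ i : Fin d, fderiv ℝ (fun y => fderiv ℝ u y (EuclideanSpace.single i (1 : ℝ))) x
    (EuclideanSpace.single i (1 : ℝ))

theorem hasDerivAt_abs_rpow_mul_self {q : ℝ} (hq : 0 ≤ q) (s : ℝ) :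
    HasDerivAt (fun t : ℝ => |t| ^ q * t) ((q + 1) * |s| ^ q) s := by
  refine hasDerivAt_of_hasDerivAt_of_ne' (g := fun t => (q + 1) * |t| ^ q) (x := 0)
    (fun t ht => ?_) ?_ ?_ s
  · have ht' : |t| ≠ 0 := abs_ne_zero.2 ht
    refine (((hasDerivAt_abs ht).rpow_const (Or.inl ht')).mul (hasDerivAt_id t)).congr_deriv ?_
    calc SignType.sign t * q * |t| ^ (q - 1) * id t + |t| ^ q * 1
        = q * (|t| ^ (q - 1) * (SignType.sign t * t)) + |t| ^ q := by simp only [id]; ring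
      _ = (q + 1) * |t| ^ q := by
        rw [sign_mul_self, Real.rpow_sub_one ht', div_mul_cancel₀ _ ht']
        ring
  · fun_prop (disch := assumption)
  · fun_prop (disch := assumption)

theorem contDiff_one_abs_rpow_mul_self {q : ℝ} (hq : 0 ≤ q) :
    ContDiff ℝ 1 (fun t : ℝ => |t| ^ q * t) := by
  refine contDiff_one_iff_deriv.2
    ⟨fun s => (hasDerivAt_abs_rpow_mul_self hq s).differentiableAt, ?_⟩
  rw [funext fun s => (hasDerivAt_abs_rpow_mul_self hq s).deriv]
  fun_prop (disch := assumption)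

section IntegrationByParts

variable {E : Type*} [NormedAddCommGroup E] [NormedSpace ℝ E] [FiniteDimensional ℝ E]
  [MeasurableSpace E] [BorelSpace E] {μ : Measure E} [μ.IsAddHaarMeasure]

theorem integral_mul_fderiv_eq_neg_fderiv_mul_of_hasCompactSupport {f g : E → ℝ}
    (hf : ContDiff ℝ 1 f) (hg : ContDiff ℝ 1 g) (hg_supp : HasCompactSupport g) (v : E) :
    ∫ x, f x * fderiv ℝ g x v ∂μ = -∫ x, fderiv ℝ f x v * g x ∂μ := by
  have hDf : Continuous fun x => fderiv ℝ f x v :=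
    (hf.continuous_fderiv one_ne_zero).clm_apply continuous_const
  have hDg : Continuous fun x => fderiv ℝ g x v :=
    (hg.continuous_fderiv one_ne_zero).clm_apply continuous_const
  exact integral_mul_fderiv_eq_neg_fderiv_mul_of_integrable
    ((hDf.mul hg.continuous).integrable_of_hasCompactSupport hg_supp.mul_left)
    ((hf.continuous.mul hDg).integrable_of_hasCompactSupport (hg_supp.fderiv_apply ℝ v).mul_left)
    ((hf.continuous.mul hg.continuous).integrable_of_hasCompactSupport hg_supp.mul_left)
    (fun x _ => hf.differentiable one_ne_zero x) (fun x _ => hg.differentiable one_ne_zero x)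

end IntegrationByParts

theorem gradient_apply_eq_fderiv_single {ι : Type*} [Fintype ι] [DecidableEq ι]
    (f : EuclideanSpace ℝ ι → ℝ) (x : EuclideanSpace ℝ ι) (i : ι) :
    gradient f x i = fderiv ℝ f x (EuclideanSpace.single i 1) := by
  rw [← inner_gradient_left, EuclideanSpace.inner_single_right]
  simp

theorem inner_gradient_eq_sum_fderiv_single {ι : Type*} [Fintype ι] [DecidableEq ι]
    (f g : EuclideanSpace ℝ ι → ℝ) (x : EuclideanSpace ℝ ι) :
    inner ℝ (gradient f x) (gradient g x) =
      ∑ i, fderiv ℝ f x (EuclideanSpace.single i 1) * fderiv ℝ g x (EuclideanSpace.single i 1) := by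
  simp only [PiLp.inner_apply, gradient_apply_eq_fderiv_single, RCLike.inner_apply, conj_trivial]
  exact Finset.sum_congr rfl fun i _ => mul_comm _ _

theorem integral_mul_lap_eq_neg_integral_inner_gradient {d : ℕ}
    {f g : EuclideanSpace ℝ (Fin d) → ℝ} (hf : ContDiff ℝ 1 f) (hg : ContDiff ℝ 2 g)
    (hg_supp : HasCompactSupport g) :
    ∫ x, f x * lap g x = -∫ x, inner ℝ (gradient f x) (gradient g x) := by
  set e : Fin d → EuclideanSpace ℝ (Fin d) := fun i => EuclideanSpace.single i 1
  have hDg : ∀ v, ContDiff ℝ 1 fun x => fderiv ℝ g x v := fun v =>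
    (hg.fderiv_right le_rfl).clm_apply contDiff_const
  have hDgv_supp : ∀ v, HasCompactSupport fun x => fderiv ℝ g x v := hg_supp.fderiv_apply ℝ
  have hD2g : ∀ i, Continuous fun x => fderiv ℝ (fun y => fderiv ℝ g y (e i)) x (e i) := fun i =>
    ((hDg _).continuous_fderiv one_ne_zero).clm_apply continuous_const
  have hDf : ∀ v, Continuous fun x => fderiv ℝ f x v := fun v =>
    (hf.continuous_fderiv one_ne_zero).clm_apply continuous_const
  have hint_lap : ∀ i, Integrable fun x => f x * fderiv ℝ (fun y => fderiv ℝ g y (e i)) x (e i) :=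
    fun i => (hf.continuous.mul (hD2g i)).integrable_of_hasCompactSupport
      ((hDgv_supp _).fderiv_apply ℝ _).mul_left
  have hint_grad : ∀ i, Integrable fun x => fderiv ℝ f x (e i) * fderiv ℝ g x (e i) :=
    fun i => ((hDf _).mul (hDg _).continuous).integrable_of_hasCompactSupport
      (hDgv_supp _).mul_left
  calc ∫ x, f x * lap g x
      = ∑ i, ∫ x, f x * fderiv ℝ (fun y => fderiv ℝ g y (e i)) x (e i) := by
        simp only [lap, Finset.mul_sum]
        exact integral_finsetSum _ fun i _ => hint_lap i
    _ = ∑ i, -∫ x, fderiv ℝ f x (e i) * fderiv ℝ g x (e i) := by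
        congr! 1 with i
        exact integral_mul_fderiv_eq_neg_fderiv_mul_of_hasCompactSupport hf (hDg _) (hDgv_supp _) _
    _ = -∫ x, inner ℝ (gradient f x) (gradient g x) := by
        simp only [Finset.sum_neg_distrib, ← integral_finsetSum _ fun i _ => hint_grad i,
          inner_gradient_eq_sum_fderiv_single, e]

theorem laplacian_signedPower_integration_by_parts_general (p : ℝ) (hp : 2 ≤ p)
    (d : ℕ) (u : EuclideanSpace ℝ (Fin d) → ℝ)
    (hu : ContDiff ℝ 2 u) (hsupp : HasCompactSupport u) :
    -∫ x, lap u x * (|u x| ^ (p - 2) * u x) =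
      (p - 1) * ∫ x, |u x| ^ (p - 2) * ‖gradient u x‖ ^ 2 := by
  have hq : 0 ≤ p - 2 := by linarith
  set φ : ℝ → ℝ := fun t => |t| ^ (p - 2) * t
  have hφu : ContDiff ℝ 1 (fun x => φ (u x)) :=
    (contDiff_one_abs_rpow_mul_self hq).comp (hu.of_le one_le_two)
  have hinner : ∀ x, inner ℝ (gradient (fun y => φ (u y)) x) (gradient u x) =
      (p - 1) * (|u x| ^ (p - 2) * ‖gradient u x‖ ^ 2) := by
    intro x
    have hD : HasFDerivAt (fun y => φ (u y)) (((p - 2 + 1) * |u x| ^ (p - 2)) • fderiv ℝ u x) x :=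
      (hasDerivAt_abs_rpow_mul_self hq (u x)).comp_hasFDerivAt x
        ((hu.differentiable two_ne_zero) x).hasFDerivAt
    rw [inner_gradient_left, hD.fderiv, smul_apply, ← inner_gradient_left,
      real_inner_self_eq_norm_sq, smul_eq_mul]
    ring
  calc -∫ x, lap u x * (|u x| ^ (p - 2) * u x)
      = -∫ x, φ (u x) * lap u x := by simp_rw [φ, mul_comm (lap u _)]
    _ = ∫ x, (p - 1) * (|u x| ^ (p - 2) * ‖gradient u x‖ ^ 2) := by
      rw [integral_mul_lap_eq_neg_integral_inner_gradient hφu hu hsupp, neg_neg]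
      simp_rw [hinner]
    _ = _ := integral_const_mul _ _

/-- For `p ≥ 2`, `d ≥ 1` and `u : ℝ^d → ℝ` twice continuously
differentiable with compact support,
`−∫ Δu · |u|^{p-2}u dx = (p − 1) ∫ |u|^{p-2} |∇u|² dx`. -/
theorem laplacian_signedPower_integration_by_parts (p : ℝ) (hp : 2 ≤ p)
    (d : ℕ) (hd : 1 ≤ d) (u : EuclideanSpace ℝ (Fin d) → ℝ)
    (hu : ContDiff ℝ 2 u) (hsupp : HasCompactSupport u) :
    -∫ x, lap u x * (|u x| ^ (p - 2) * u x) =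
      (p - 1) * ∫ x, |u x| ^ (p - 2) * ‖gradient u x‖ ^ 2 :=
  laplacian_signedPower_integration_by_parts_general p hp d u hu hsupp
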